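/- arXiv:2203.12074 — 3 statements merged into one kernel-verified Lean document; each statement's English description precedes it below -/
import Mathlib

section
/- Let R be a 1-strongly convex, continuously differentiable, G-smooth regularizer on a convex compact set X (i.e., ‖∇R(x) − ∇R(x̂)‖_* ≤ G‖x − x̂‖ for all x, x̂ ∈ X). Suppose x̂^(t) = argmax_{x̂∈X} {⟨x̂, u⟩ − (1/η)·D_R(x̂ ‖ x̂^(t−1))} with ‖x̂^(t) − x̂^(t−1)‖ ≤ 2εη. Then for every x̂ ∈ X, ⟨x̂ − x̂^(t), u⟩ ≤ 2εG·Ω_X, where Ω_X is the diameter of X in the norm ‖·‖. -/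
/-!
At the maximizer `x̂t`, the gradient of the objective, `u − (1/η)(∇R(x̂t) − ∇R(x̂prev))`, has
nonpositive inner product with every feasible direction `x̂ − x̂t`. Hence
`⟨x̂ − x̂t, u⟩ ≤ (1/η)⟨∇R(x̂t) − ∇R(x̂prev), x̂ − x̂t⟩`, and Cauchy–Schwarz with `G`-smoothness,
the step bound `2εη` and the diameter bound `Ω_X` gives `(1/η) · G · 2εη · Ω_X = 2εG·Ω_X`.
-/

open scoped RealInnerProductSpace

/-- The Bregman divergence `D_R(x ‖ x̂)` of `R`, with `gR` playing the role of `∇R`. -/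
noncomputable def breg {E : Type*} [NormedAddCommGroup E] [InnerProductSpace ℝ E]
    (R : E → ℝ) (gR : E → E) (x xh : E) : ℝ :=
  R x - R xh - ⟪gR xh, x - xh⟫

section

open InnerProductSpace

variable {E : Type*} [NormedAddCommGroup E] [InnerProductSpace ℝ E] [CompleteSpace E]

theorem hasGradientAt_inner_left (u x : E) : HasGradientAt (fun z => ⟪z, u⟫) u x := by
  rw [hasGradientAt_iff_hasFDerivAt]
  exact (toDual ℝ E u).hasFDerivAt.congr_of_eventuallyEq
    (.of_forall fun z => by simp [real_inner_comm])

theorem HasGradientAt.sub {f g : E → ℝ} {f' g' x : E} (hf : HasGradientAt f f' x)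
    (hg : HasGradientAt g g' x) : HasGradientAt (fun z => f z - g z) (f' - g') x := by
  rw [hasGradientAt_iff_hasFDerivAt] at hf hg ⊢
  rw [map_sub]
  exact hf.sub hg

theorem HasGradientAt.const_mul {f : E → ℝ} {f' x : E} (c : ℝ) (hf : HasGradientAt f f' x) :
    HasGradientAt (fun z => c * f z) (c • f') x := by
  rw [hasGradientAt_iff_hasFDerivAt] at hf ⊢
  simpa using hf.const_mul c

theorem hasGradientAt_breg {R : E → ℝ} {gR : E → E} {x : E} (y : E)
    (hR : HasGradientAt R (gR x) x) :
    HasGradientAt (fun z => breg R gR z y) (gR x - gR y) x := by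
  rw [hasGradientAt_iff_hasFDerivAt] at hR ⊢
  have hlin : HasFDerivAt (fun z => ⟪gR y, z - y⟫) (toDual ℝ E (gR y)) x :=
    ((toDual ℝ E (gR y)).hasFDerivAt.sub_const ⟪gR y, y⟫).congr_of_eventuallyEq
      (.of_forall fun z => by simp [inner_sub_right])
  rw [map_sub]
  exact (hR.sub_const (R y)).sub hlin

theorem IsMaxOn.inner_gradient_sub_nonpos {f : E → ℝ} {f' : E} {s : Set E} {a b : E}
    (hs : Convex ℝ s) (hf : IsMaxOn f s a) (hf' : HasGradientAt f f' a) (ha : a ∈ s)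
    (hb : b ∈ s) : ⟪f', b - a⟫ ≤ 0 := by
  simpa using hf.localize.hasFDerivWithinAt_nonpos
    (hasGradientAt_iff_hasFDerivAt.mp hf').hasFDerivWithinAt
    (sub_mem_posTangentConeAt_of_segment_subset (hs.segment_subset ha hb))

theorem inner_sub_le_of_isMaxOn_mirrorStep {X : Set E} (hX : Convex ℝ X) {R : E → ℝ}
    {gR : E → E} {η : ℝ} {u y x xh : E} (hR : HasGradientAt R (gR x) x)
    (hmax : IsMaxOn (fun z => ⟪z, u⟫ - (1 / η) * breg R gR z y) X x) (hx : x ∈ X)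
    (hxh : xh ∈ X) : ⟪xh - x, u⟫ ≤ (1 / η) * ⟪gR x - gR y, xh - x⟫ := by
  have hgrad := (hasGradientAt_inner_left u x).sub ((hasGradientAt_breg y hR).const_mul (1 / η))
  have h := hmax.inner_gradient_sub_nonpos hX hgrad hx hxh
  rw [inner_sub_left, real_inner_smul_left, real_inner_comm] at h
  linarith

end

theorem stmt3_general {E : Type*} [NormedAddCommGroup E] [InnerProductSpace ℝ E] [CompleteSpace E]
    (X : Set E) (hX : Convex ℝ X)
    (R : E → ℝ) (gR : E → E)
    (hgrad : ∀ z ∈ X, HasGradientAt R (gR z) z)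
    (G : ℝ) (hG : 0 < G)
    (hsmooth : ∀ z ∈ X, ∀ z' ∈ X, ‖gR z - gR z'‖ ≤ G * ‖z - z'‖)
    (ΩX : ℝ) (hΩX : ∀ z ∈ X, ∀ z' ∈ X, ‖z - z'‖ ≤ ΩX)
    (η ε : ℝ) (hη : 0 < η)
    (u : E)
    (xhprev : E) (hxhprev : xhprev ∈ X)
    (xht : E) (hxht : xht ∈ X)
    (hmax : IsMaxOn (fun z => ⟪z, u⟫ - (1 / η) * breg R gR z xhprev) X xht)
    (hclose : ‖xht - xhprev‖ ≤ 2 * ε * η) :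
    ∀ xh ∈ X, ⟪xh - xht, u⟫ ≤ 2 * ε * G * ΩX := by
  intro xh hxh
  have hstep : ‖gR xht - gR xhprev‖ ≤ G * (2 * ε * η) :=
    (hsmooth xht hxht xhprev hxhprev).trans (mul_le_mul_of_nonneg_left hclose hG.le)
  calc ⟪xh - xht, u⟫ ≤ (1 / η) * ⟪gR xht - gR xhprev, xh - xht⟫ :=
        inner_sub_le_of_isMaxOn_mirrorStep hX (hgrad xht hxht) hmax hxht hxh
    _ ≤ (1 / η) * (‖gR xht - gR xhprev‖ * ‖xh - xht‖) := by
        gcongr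
        exact real_inner_le_norm _ _
    _ ≤ (1 / η) * (G * (2 * ε * η) * ΩX) := by
        gcongr
        · exact (norm_nonneg _).trans hstep
        · exact hΩX xh hxh xht hxht
    _ = 2 * ε * G * ΩX := by
        field_simp

/-- Let `R` be a `1`-strongly convex, continuously differentiable,
`G`-smooth regularizer on a convex compact set `X` (`‖∇R(x) − ∇R(x̂)‖_* ≤ G‖x − x̂‖` for all
`x, x̂ ∈ X`). Suppose `x̂t` maximizes `x̂ ↦ ⟨x̂, u⟩ − (1/η)·D_R(x̂ ‖ x̂prev)` over `X` and
`‖x̂t − x̂prev‖ ≤ 2εη`. Then for every `x̂ ∈ X`, `⟨x̂ − x̂t, u⟩ ≤ 2εG·Ω_X`, where `Ω_X` is the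
diameter of `X`. -/
theorem stmt3 {E : Type*} [NormedAddCommGroup E] [InnerProductSpace ℝ E] [CompleteSpace E]
    (X : Set E) (hX : Convex ℝ X) (hXc : IsCompact X) (hXne : X.Nonempty)
    (R : E → ℝ) (gR : E → E)
    (hgrad : ∀ z ∈ X, HasGradientAt R (gR z) z)
    (hsc : ∀ z ∈ X, ∀ z' ∈ X,
      R z' + ⟪gR z', z - z'⟫ + (1 / 2) * ‖z - z'‖ ^ 2 ≤ R z)
    (G : ℝ) (hG : 0 < G)
    (hsmooth : ∀ z ∈ X, ∀ z' ∈ X, ‖gR z - gR z'‖ ≤ G * ‖z - z'‖)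
    (ΩX : ℝ) (hΩX : ∀ z ∈ X, ∀ z' ∈ X, ‖z - z'‖ ≤ ΩX)
    (η ε : ℝ) (hη : 0 < η) (hε : 0 < ε)
    (u : E)
    (xhprev : E) (hxhprev : xhprev ∈ X)
    (xht : E) (hxht : xht ∈ X)
    (hmax : IsMaxOn (fun z => ⟪z, u⟫ - (1 / η) * breg R gR z xhprev) X xht)
    (hclose : ‖xht - xhprev‖ ≤ 2 * ε * η) :
    ∀ xh ∈ X, ⟪xh - xht, u⟫ ≤ 2 * ε * G * ΩX :=
  stmt3_general X hX R gR hgrad G hG hsmooth ΩX hΩX η ε hη u xhprev hxhprev xht hxht hmax hclose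
end

section
/- Consider a bimatrix game (A, B) with strategy sets X, Y and suppose both players employ OMD with learning rate η > 0 and G-smooth 1-strongly convex regularizers. If at some time t we have ‖x^(t) − x̂^(t−1)‖ ≤ εη, ‖x̂^(t) − x^(t)‖ ≤ εη, ‖y^(t) − ŷ^(t−1)‖ ≤ εη and ‖ŷ^(t) − y^(t)‖ ≤ εη, then (x^(t), y^(t)) is a (2εG·max{Ω_X, Ω_Y} + εη)-approximate Nash equilibrium of (A, B). -/
/-!
The secondary iterate `x̂ᵗ` maximizes `⟪·, A yᵗ⟫ - D(· ‖ x̂ᵗ⁻¹) / η` over `X`. Comparing it with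
points `x̂ᵗ + l • (z - x̂ᵗ)` and letting `l → 0` gives the first-order optimality condition
`⟪z - x̂ᵗ, A yᵗ⟫ ≤ ⟪∇R(x̂ᵗ) - ∇R(x̂ᵗ⁻¹), z - x̂ᵗ⟫ / η`, and `G`-smoothness bounds the right-hand
side by `G ‖x̂ᵗ - x̂ᵗ⁻¹‖ Ω / η ≤ 2εGΩ`. Replacing `x̂ᵗ` by `xᵗ` costs at most `‖x̂ᵗ - xᵗ‖ ≤ εη`.
-/

open scoped RealInnerProductSpace

open Set Filter Topology

theorem le_of_forall_mem_Ioc_le_add_mul {a c K : ℝ} (h : ∀ l ∈ Ioc (0 : ℝ) 1, c ≤ a + l * K) :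
    c ≤ a := by
  have hlim : Tendsto (fun l : ℝ => a + l * K) (𝓝[>] 0) (𝓝 a) := by
    refine ((?_ : Continuous fun l : ℝ => a + l * K).tendsto' 0 a (by simp)).mono_left
      nhdsWithin_le_nhds
    fun_prop
  exact ge_of_tendsto hlim (eventually_of_mem (Ioc_mem_nhdsGT one_pos) h)

section Bregman

variable {E : Type*} [NormedAddCommGroup E] [InnerProductSpace ℝ E]

theorem breg_sub_breg_le {R : E → ℝ} {g : E → E} {z w p : E}
    (hconv : R z + ⟪g z, w - z⟫ ≤ R w) :
    breg R g z p - breg R g w p ≤ ‖g z - g p‖ * ‖z - w‖ :=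
  calc breg R g z p - breg R g w p = R z - R w - ⟪g p, z - w⟫ := by
        simp only [breg, inner_sub_right]; ring
    _ ≤ ⟪g z - g p, z - w⟫ := by
        simp only [inner_sub_left, inner_sub_right] at hconv ⊢; linarith
    _ ≤ ‖g z - g p‖ * ‖z - w‖ := real_inner_le_norm _ _

variable {X : Set E} {R : E → ℝ} {g : E → E} {G η : ℝ}

theorem inner_sub_le_of_isMaxOn_sub_breg (hX : Convex ℝ X) (hη : 0 < η)
    (hconv : ∀ z ∈ X, ∀ z' ∈ X, R z' + ⟪g z', z - z'⟫ ≤ R z)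
    (hsm : ∀ z ∈ X, ∀ z' ∈ X, ‖g z - g z'‖ ≤ G * ‖z - z'‖) (hG : 0 ≤ G)
    {v p xh z : E} (hp : p ∈ X) (hxh : xh ∈ X) (hz : z ∈ X)
    (hmax : IsMaxOn (fun z => ⟪z, v⟫ - (1 / η) * breg R g z p) X xh) :
    ⟪z - xh, v⟫ ≤ G * ‖xh - p‖ * ‖z - xh‖ / η := by
  set δ := ‖xh - p‖
  set d := ‖z - xh‖
  refine le_of_forall_mem_Ioc_le_add_mul (K := G * d ^ 2 / η) fun l ⟨hl0, hl1⟩ => ?_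
  set zl := xh + l • (z - xh)
  have hzl : zl ∈ X := by
    convert hX hxh hz (by linarith : 0 ≤ 1 - l) hl0.le (by ring) using 1
    module
  have hzl_sub : ‖zl - xh‖ = l * d := by
    rw [add_sub_cancel_left, norm_smul, Real.norm_of_nonneg hl0.le]
  have hzl_sub_p : ‖zl - p‖ ≤ δ + l * d := by
    calc ‖zl - p‖ = ‖(xh - p) + l • (z - xh)‖ := congrArg norm (add_sub_right_comm _ _ _)
      _ ≤ δ + l * d := by
        grw [norm_add_le, norm_smul, Real.norm_of_nonneg hl0.le]
  have hopt : l * ⟪z - xh, v⟫ ≤ (1 / η) * (breg R g zl p - breg R g xh p) := by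
    have hle := isMaxOn_iff.mp hmax zl hzl
    have hlin : ⟪zl, v⟫ = ⟪xh, v⟫ + l * ⟪z - xh, v⟫ := by
      rw [inner_add_left, real_inner_smul_left]
    simp only [hlin] at hle
    linarith
  have hbreg : breg R g zl p - breg R g xh p ≤ G * (δ + l * d) * (l * d) := by
    calc breg R g zl p - breg R g xh p ≤ ‖g zl - g p‖ * ‖zl - xh‖ :=
          breg_sub_breg_le (hconv xh hxh zl hzl)
      _ ≤ G * (δ + l * d) * (l * d) := by
        rw [hzl_sub]
        gcongr
        exact (hsm zl hzl p hp).trans (by gcongr)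
  refine le_of_mul_le_mul_left ?_ hl0
  calc l * ⟪z - xh, v⟫ ≤ (1 / η) * (G * (δ + l * d) * (l * d)) :=
        hopt.trans (by gcongr)
    _ = l * (G * δ * d / η + l * (G * d ^ 2 / η)) := by ring

theorem inner_le_inner_add_of_isMaxOn_sub_breg (hX : Convex ℝ X) (hη : 0 < η)
    (hconv : ∀ z ∈ X, ∀ z' ∈ X, R z' + ⟪g z', z - z'⟫ ≤ R z)
    (hsm : ∀ z ∈ X, ∀ z' ∈ X, ‖g z - g z'‖ ≤ G * ‖z - z'‖) (hG : 0 ≤ G)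
    {Ω ε : ℝ} (hΩ : ∀ z ∈ X, ∀ z' ∈ X, ‖z - z'‖ ≤ Ω)
    {v p xh x : E} (hv : ‖v‖ ≤ 1) (hp : p ∈ X) (hxh : xh ∈ X)
    (hmax : IsMaxOn (fun z => ⟪z, v⟫ - (1 / η) * breg R g z p) X xh)
    (hxp : ‖x - p‖ ≤ ε * η) (hxhx : ‖xh - x‖ ≤ ε * η) :
    ∀ z ∈ X, ⟪z, v⟫ ≤ ⟪x, v⟫ + (2 * ε * G * Ω + ε * η) := by
  intro z hz
  have hεη : 0 ≤ ε * η := (norm_nonneg _).trans hxhx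
  have hgap : ⟪z - xh, v⟫ ≤ 2 * ε * G * Ω := by
    have hδ : ‖xh - p‖ ≤ 2 * ε * η := by
      linarith [norm_sub_le_norm_sub_add_norm_sub xh x p]
    grw [inner_sub_le_of_isMaxOn_sub_breg hX hη hconv hsm hG hp hxh hz hmax,
      div_le_iff₀ hη, hδ, hΩ z hz xh hxh]
    · exact le_of_eq (by ring)
    · exact mul_nonneg hG (by linarith)
  have hdrift : ⟪xh - x, v⟫ ≤ ε * η := by
    grw [real_inner_le_norm, hxhx, hv, mul_one]
  have hsplit : ⟪z, v⟫ = ⟪x, v⟫ + ⟪z - xh, v⟫ + ⟪xh - x, v⟫ := by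
    simp only [inner_sub_left]; ring
  linarith

end Bregman

theorem stmt4_general {E F : Type*} [NormedAddCommGroup E] [InnerProductSpace ℝ E]
    [NormedAddCommGroup F] [InnerProductSpace ℝ F]
    (X : Set E) (hX : Convex ℝ X)
    (Y : Set F) (hY : Convex ℝ Y)
    (A : F →L[ℝ] E) (Bt : E →L[ℝ] F)
    (hAnorm : ∀ w ∈ Y, ‖A w‖ ≤ 1) (hBnorm : ∀ z ∈ X, ‖Bt z‖ ≤ 1)
    (ΩX ΩY : ℝ)
    (hΩX : ∀ z ∈ X, ∀ z' ∈ X, ‖z - z'‖ ≤ ΩX)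
    (hΩY : ∀ w ∈ Y, ∀ w' ∈ Y, ‖w - w'‖ ≤ ΩY)
    (η ε G : ℝ) (hη : 0 < η) (hG : 0 < G)
    (RX : E → ℝ) (gRX : E → E)
    (hRXsc : ∀ z ∈ X, ∀ z' ∈ X,
      RX z' + ⟪gRX z', z - z'⟫ + (1 / 2) * ‖z - z'‖ ^ 2 ≤ RX z)
    (hRXsm : ∀ z ∈ X, ∀ z' ∈ X, ‖gRX z - gRX z'‖ ≤ G * ‖z - z'‖)
    (RY : F → ℝ) (gRY : F → F)
    (hRYsc : ∀ w ∈ Y, ∀ w' ∈ Y,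
      RY w' + ⟪gRY w', w - w'⟫ + (1 / 2) * ‖w - w'‖ ^ 2 ≤ RY w)
    (hRYsm : ∀ w ∈ Y, ∀ w' ∈ Y, ‖gRY w - gRY w'‖ ≤ G * ‖w - w'‖)
    (x xh : ℕ → E) (y yh : ℕ → F)
    (hxmem : ∀ t, x t ∈ X) (hxhmem : ∀ t, xh t ∈ X)
    (hymem : ∀ t, y t ∈ Y) (hyhmem : ∀ t, yh t ∈ Y)
    (hxhstep : ∀ t : ℕ, 1 ≤ t → IsMaxOn
      (fun z => ⟪z, A (y t)⟫ - (1 / η) * breg RX gRX z (xh (t - 1))) X (xh t))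
    (hyhstep : ∀ t : ℕ, 1 ≤ t → IsMaxOn
      (fun w => ⟪w, Bt (x t)⟫ - (1 / η) * breg RY gRY w (yh (t - 1))) Y (yh t))
    (t : ℕ) (ht : 1 ≤ t)
    (h1 : ‖x t - xh (t - 1)‖ ≤ ε * η) (h2 : ‖xh t - x t‖ ≤ ε * η)
    (h3 : ‖y t - yh (t - 1)‖ ≤ ε * η) (h4 : ‖yh t - y t‖ ≤ ε * η) :
    (∀ z ∈ X, ⟪z, A (y t)⟫ ≤ ⟪x t, A (y t)⟫ + (2 * ε * G * max ΩX ΩY + ε * η))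
    ∧ (∀ w ∈ Y, ⟪w, Bt (x t)⟫ ≤ ⟪y t, Bt (x t)⟫ + (2 * ε * G * max ΩX ΩY + ε * η)) := by
  have hRXconv : ∀ z ∈ X, ∀ z' ∈ X, RX z' + ⟪gRX z', z - z'⟫ ≤ RX z := fun z hz z' hz' =>
    le_of_add_le_of_nonneg_left (hRXsc z hz z' hz') (by positivity)
  have hRYconv : ∀ w ∈ Y, ∀ w' ∈ Y, RY w' + ⟪gRY w', w - w'⟫ ≤ RY w := fun w hw w' hw' =>
    le_of_add_le_of_nonneg_left (hRYsc w hw w' hw') (by positivity)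
  have hΩX' : ∀ z ∈ X, ∀ z' ∈ X, ‖z - z'‖ ≤ max ΩX ΩY := fun z hz z' hz' =>
    (hΩX z hz z' hz').trans (le_max_left _ _)
  have hΩY' : ∀ w ∈ Y, ∀ w' ∈ Y, ‖w - w'‖ ≤ max ΩX ΩY := fun w hw w' hw' =>
    (hΩY w hw w' hw').trans (le_max_right _ _)
  exact ⟨inner_le_inner_add_of_isMaxOn_sub_breg hX hη hRXconv hRXsm hG.le hΩX'
      (hAnorm _ (hymem t)) (hxhmem _) (hxhmem _) (hxhstep t ht) h1 h2,
    inner_le_inner_add_of_isMaxOn_sub_breg hY hη hRYconv hRYsm hG.le hΩY'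
      (hBnorm _ (hxmem t)) (hyhmem _) (hyhmem _) (hyhstep t ht) h3 h4⟩

/-- **Approximate fixed points of OMD are approximate Nash equilibria.**
In a bimatrix game `(A, B)` where both players employ OMD with learning rate `η > 0` and
`G`-smooth `1`-strongly convex regularizers, if at some time `t ≥ 1` all four displacements
`‖x⁽ᵗ⁾ − x̂⁽ᵗ⁻¹⁾‖, ‖x̂⁽ᵗ⁾ − x⁽ᵗ⁾‖, ‖y⁽ᵗ⁾ − ŷ⁽ᵗ⁻¹⁾‖, ‖ŷ⁽ᵗ⁾ − y⁽ᵗ⁾‖` are at most `εη`, then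
`(x⁽ᵗ⁾, y⁽ᵗ⁾)` is a `(2εG·max{Ω_X, Ω_Y} + εη)`-approximate Nash equilibrium of `(A, B)`. -/
theorem stmt4 {E F : Type*} [NormedAddCommGroup E] [InnerProductSpace ℝ E] [CompleteSpace E]
    [NormedAddCommGroup F] [InnerProductSpace ℝ F] [CompleteSpace F]
    (X : Set E) (hX : Convex ℝ X) (hXc : IsCompact X) (hXne : X.Nonempty)
    (Y : Set F) (hY : Convex ℝ Y) (hYc : IsCompact Y) (hYne : Y.Nonempty)
    (A : F →L[ℝ] E) (Bt : E →L[ℝ] F)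
    (hAnorm : ∀ w ∈ Y, ‖A w‖ ≤ 1) (hBnorm : ∀ z ∈ X, ‖Bt z‖ ≤ 1)
    (ΩX ΩY : ℝ)
    (hΩX : ∀ z ∈ X, ∀ z' ∈ X, ‖z - z'‖ ≤ ΩX)
    (hΩY : ∀ w ∈ Y, ∀ w' ∈ Y, ‖w - w'‖ ≤ ΩY)
    (η ε G : ℝ) (hη : 0 < η) (hε : 0 < ε) (hG : 0 < G)
    (RX : E → ℝ) (gRX : E → E)
    (hgradX : ∀ z ∈ X, HasGradientAt RX (gRX z) z)
    (hRXsc : ∀ z ∈ X, ∀ z' ∈ X,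
      RX z' + ⟪gRX z', z - z'⟫ + (1 / 2) * ‖z - z'‖ ^ 2 ≤ RX z)
    (hRXsm : ∀ z ∈ X, ∀ z' ∈ X, ‖gRX z - gRX z'‖ ≤ G * ‖z - z'‖)
    (RY : F → ℝ) (gRY : F → F)
    (hgradY : ∀ w ∈ Y, HasGradientAt RY (gRY w) w)
    (hRYsc : ∀ w ∈ Y, ∀ w' ∈ Y,
      RY w' + ⟪gRY w', w - w'⟫ + (1 / 2) * ‖w - w'‖ ^ 2 ≤ RY w)
    (hRYsm : ∀ w ∈ Y, ∀ w' ∈ Y, ‖gRY w - gRY w'‖ ≤ G * ‖w - w'‖)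
    (x xh : ℕ → E) (y yh : ℕ → F)
    (hxmem : ∀ t, x t ∈ X) (hxhmem : ∀ t, xh t ∈ X)
    (hymem : ∀ t, y t ∈ Y) (hyhmem : ∀ t, yh t ∈ Y)
    (hx0 : x 0 = xh 0) (hy0 : y 0 = yh 0)
    (hxstep : ∀ t : ℕ, 1 ≤ t → IsMaxOn
      (fun z => ⟪z, A (y (t - 1))⟫ - (1 / η) * breg RX gRX z (xh (t - 1))) X (x t))
    (hxhstep : ∀ t : ℕ, 1 ≤ t → IsMaxOn
      (fun z => ⟪z, A (y t)⟫ - (1 / η) * breg RX gRX z (xh (t - 1))) X (xh t))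
    (hystep : ∀ t : ℕ, 1 ≤ t → IsMaxOn
      (fun w => ⟪w, Bt (x (t - 1))⟫ - (1 / η) * breg RY gRY w (yh (t - 1))) Y (y t))
    (hyhstep : ∀ t : ℕ, 1 ≤ t → IsMaxOn
      (fun w => ⟪w, Bt (x t)⟫ - (1 / η) * breg RY gRY w (yh (t - 1))) Y (yh t))
    (t : ℕ) (ht : 1 ≤ t)
    (h1 : ‖x t - xh (t - 1)‖ ≤ ε * η) (h2 : ‖xh t - x t‖ ≤ ε * η)
    (h3 : ‖y t - yh (t - 1)‖ ≤ ε * η) (h4 : ‖yh t - y t‖ ≤ ε * η) :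
    (∀ z ∈ X, ⟪z, A (y t)⟫ ≤ ⟪x t, A (y t)⟫ + (2 * ε * G * max ΩX ΩY + ε * η))
    ∧ (∀ w ∈ Y, ⟪w, Bt (x t)⟫ ≤ ⟪y t, Bt (x t)⟫ + (2 * ε * G * max ΩX ΩY + ε * η)) :=
  stmt4_general X hX Y hY A Bt hAnorm hBnorm ΩX ΩY hΩX hΩY η ε G hη hG RX gRX hRXsc hRXsm RY gRY
    hRYsc hRYsm x xh y yh hxmem hxhmem hymem hyhmem hxhstep hyhstep t ht h1 h2 h3 h4
end

section
/- Suppose both players in a bimatrix game (A, B) employ OMD with learning rate η > 0 and 1-strongly convex regularizers, with utility of player X at time t given by A·y^(t) and ‖A·y‖_* ≤ 1 for all y ∈ Y. Then for any T ∈ ℕ, Σ_{t=1}^T ‖y^(t) − y^(t−1)‖ ≥ (1/(2η·Ω_X·‖A‖_op)) · Σ_{t=1}^T (‖x^(t) − x̂^(t−1)‖² + ‖x̂^(t) − x^(t)‖²) − 2/‖A‖_op, where Ω_X := max_{x∈X} ‖x‖ and ‖A‖_op := sup_{‖u‖≤1} ‖Au‖_*. -/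
open Finset Filter Topology
open scoped RealInnerProductSpace

section StrongConvexity

variable {E : Type*} [NormedAddCommGroup E] [InnerProductSpace ℝ E] {X : Set E}

lemma strongConvexOn_of_gradient_ineq (hX : Convex ℝ X) {f : E → ℝ} {g : E → E}
    (hsc : ∀ z ∈ X, ∀ z' ∈ X, f z' + ⟪g z', z - z'⟫ + (1 / 2) * ‖z - z'‖ ^ 2 ≤ f z) :
    StrongConvexOn X 1 f := by
  refine ⟨hX, fun a ha b hb s t hs ht hst => ?_⟩
  obtain rfl : s = 1 - t := by linarith
  set w := (1 - t) • a + t • b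
  have hw : w ∈ X := hX ha hb hs ht hst
  have haw : a - w = t • (a - b) := by module
  have hbw : b - w = (-(1 - t)) • (a - b) := by module
  have ha' := hsc a ha w hw
  have hb' := hsc b hb w hw
  rw [haw, real_inner_smul_right, norm_smul, mul_pow, Real.norm_eq_abs, sq_abs] at ha'
  rw [hbw, real_inner_smul_right, norm_smul, mul_pow, Real.norm_eq_abs, sq_abs] at hb'
  simp only [smul_eq_mul]
  nlinarith [mul_le_mul_of_nonneg_left ha' hs, mul_le_mul_of_nonneg_left hb' ht]

lemma StrongConvexOn.add_half_sq_le_of_isMinOn {f : E → ℝ} {m : ℝ} (hf : StrongConvexOn X m f)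
    {x z : E} (hx : x ∈ X) (hz : z ∈ X) (hmin : IsMinOn f X x) :
    f x + m / 2 * ‖z - x‖ ^ 2 ≤ f z := by
  set c := m / 2 * ‖z - x‖ ^ 2
  have hseg : ∀ l ∈ Set.Ioo (0 : ℝ) 1, f x + (1 - l) * c ≤ f z := by
    rintro l ⟨hl0, hl1⟩
    have hconv := hf.2 hx hz (by linarith : 0 ≤ 1 - l) hl0.le (by ring)
    have hopt := isMinOn_iff.1 hmin _ (hf.1 hx hz (by linarith : 0 ≤ 1 - l) hl0.le (by ring))
    simp only [smul_eq_mul, norm_sub_rev x z] at hconv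
    have : l * (f x + (1 - l) * c) ≤ l * f z := by simp only [c]; linarith
    exact le_of_mul_le_mul_left this hl0
  have hlim : Tendsto (fun l : ℝ => f x + (1 - l) * c) (𝓝[>] 0) (𝓝 (f x + c)) := by
    refine tendsto_nhdsWithin_of_tendsto_nhds ?_
    simpa using (show Continuous fun l : ℝ => f x + (1 - l) * c by fun_prop).tendsto 0
  exact le_of_tendsto hlim (eventually_of_mem (Ioo_mem_nhdsGT one_pos) hseg)

end StrongConvexity

section ProximalStep

variable {E : Type*} [NormedAddCommGroup E] [InnerProductSpace ℝ E]
  {X : Set E} {R : E → ℝ} {g : E → E}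

@[simp]
lemma breg_self (x : E) : breg R g x x = 0 := by
  simp [breg]

lemma breg_nonneg
    (hsc : ∀ z ∈ X, ∀ z' ∈ X, R z' + ⟪g z', z - z'⟫ + (1 / 2) * ‖z - z'‖ ^ 2 ≤ R z)
    {z z' : E} (hz : z ∈ X) (hz' : z' ∈ X) : 0 ≤ breg R g z z' := by
  have := hsc z hz z' hz'
  simp only [breg]
  nlinarith [sq_nonneg ‖z - z'‖]

lemma breg_le_of_isMaxOn_prox (hX : Convex ℝ X)
    (hsc : ∀ z ∈ X, ∀ z' ∈ X, R z' + ⟪g z', z - z'⟫ + (1 / 2) * ‖z - z'‖ ^ 2 ≤ R z)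
    {η : ℝ} (hη : 0 < η) {u xh xo z : E} (hxo : xo ∈ X) (hz : z ∈ X)
    (hopt : IsMaxOn (fun w => ⟪w, u⟫ - (1 / η) * breg R g w xh) X xo) :
    η * ⟪z - xo, u⟫ + breg R g xo xh + (1 / 2) * ‖z - xo‖ ^ 2 ≤ breg R g z xh := by
  -- the proximal objective is `R` plus an affine map, hence shares the gradient inequality of `R`
  have hconv : StrongConvexOn X 1 fun w => breg R g w xh - η * ⟪w, u⟫ := by
    refine strongConvexOn_of_gradient_ineq hX (g := fun w => g w - g xh - η • u) ?_
    intro z hz z' hz'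
    have := hsc z hz z' hz'
    simp only [breg, inner_sub_left, inner_sub_right, real_inner_smul_left,
      real_inner_comm u] at this ⊢
    linarith
  have hmin : IsMinOn (fun w => breg R g w xh - η * ⟪w, u⟫) X xo := by
    refine isMinOn_iff.2 fun w hw => ?_
    have h := mul_le_mul_of_nonneg_left (isMaxOn_iff.1 hopt w hw) hη.le
    field_simp at h
    linarith
  have := hconv.add_half_sq_le_of_isMinOn hxo hz hmin
  rw [inner_sub_left]
  linarith

lemma sq_add_sq_le_of_optimistic_step (hX : Convex ℝ X)
    (hsc : ∀ z ∈ X, ∀ z' ∈ X, R z' + ⟪g z', z - z'⟫ + (1 / 2) * ‖z - z'‖ ^ 2 ≤ R z)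
    {η : ℝ} (hη : 0 < η) {u' u xh' x xh : E} (hxh' : xh' ∈ X) (hx : x ∈ X) (hxh : xh ∈ X)
    (hxopt : IsMaxOn (fun z => ⟪z, u'⟫ - (1 / η) * breg R g z xh') X x)
    (hxhopt : IsMaxOn (fun z => ⟪z, u⟫ - (1 / η) * breg R g z xh') X xh) :
    ‖x - xh'‖ ^ 2 + ‖xh - x‖ ^ 2 ≤ 2 * η * (⟪xh, u⟫ - ⟪xh', u'⟫ + ⟪x, u' - u⟫) := by
  have hxh_step := breg_le_of_isMaxOn_prox hX hsc hη hxh hx hxhopt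
  have hx_step := breg_le_of_isMaxOn_prox hX hsc hη hx hxh' hxopt
  have hbreg := breg_nonneg hsc hxh hxh'
  rw [breg_self, norm_sub_rev xh' x] at hx_step
  rw [norm_sub_rev x xh] at hxh_step
  simp only [inner_sub_left, inner_sub_right] at hxh_step hx_step ⊢
  linarith

end ProximalStep

lemma sum_Icc_one_sub_pred {M : Type*} [AddCommGroup M] (f : ℕ → M) (T : ℕ) :
    ∑ t ∈ Icc 1 T, (f t - f (t - 1)) = f T - f 0 := by
  induction T with
  | zero => simp
  | succ T ih =>
    rw [sum_Icc_succ_top (by omega), ih, Nat.add_sub_cancel]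
    abel

lemma real_inner_map_sub_le {E F : Type*} [NormedAddCommGroup E] [InnerProductSpace ℝ E]
    [NormedAddCommGroup F] [NormedSpace ℝ F] (A : F →L[ℝ] E) {v : E} {Ω : ℝ} (hv : ‖v‖ ≤ Ω)
    (w w' : F) : ⟪v, A w' - A w⟫ ≤ Ω * ‖A‖ * ‖w - w'‖ :=
  calc ⟪v, A w' - A w⟫ ≤ ‖v‖ * ‖A (w - w')‖ := by
        rw [map_sub, norm_sub_rev]; exact real_inner_le_norm _ _
    _ ≤ Ω * (‖A‖ * ‖w - w'‖) :=
        mul_le_mul hv (A.le_opNorm _) (norm_nonneg _) ((norm_nonneg _).trans hv)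
    _ = Ω * ‖A‖ * ‖w - w'‖ := by ring

lemma one_div_mul_sub_two_div_le {η Ω a S P : ℝ} (hη : 0 ≤ η) (hΩ : 0 ≤ Ω) (ha : 0 ≤ a)
    (hP : 0 ≤ P) (hS : S ≤ 2 * η * (2 * Ω + Ω * a * P)) :
    1 / (2 * η * Ω * a) * S - 2 / a ≤ P := by
  rcases (by positivity : 0 ≤ 2 * η * Ω * a).eq_or_lt with hc | hc
  · rw [← hc, div_zero, zero_mul, zero_sub]
    exact (neg_nonpos.2 (by positivity)).trans hP
  · have hη0 : η ≠ 0 := by rintro rfl; simp at hc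
    have hΩ0 : Ω ≠ 0 := by rintro rfl; simp at hc
    have ha0 : a ≠ 0 := by rintro rfl; simp at hc
    calc _ ≤ 1 / (2 * η * Ω * a) * (2 * η * (2 * Ω + Ω * a * P)) - 2 / a := by gcongr
      _ = P := by field_simp; ring

theorem stmt5_general {E F : Type*} [NormedAddCommGroup E] [InnerProductSpace ℝ E]
    [NormedAddCommGroup F] [InnerProductSpace ℝ F]
    (X : Set E) (hX : Convex ℝ X)
    (Y : Set F)
    (A : F →L[ℝ] E)
    (hAnorm : ∀ w ∈ Y, ‖A w‖ ≤ 1)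
    (ΩX : ℝ) (hΩX : IsGreatest ((fun z => ‖z‖) '' X) ΩX)
    (η : ℝ) (hη : 0 < η)
    (RX : E → ℝ) (gRX : E → E)
    (hRXsc : ∀ z ∈ X, ∀ z' ∈ X,
      RX z' + ⟪gRX z', z - z'⟫ + (1 / 2) * ‖z - z'‖ ^ 2 ≤ RX z)
    (x xh : ℕ → E) (y : ℕ → F)
    (hxmem : ∀ t, x t ∈ X) (hxhmem : ∀ t, xh t ∈ X) (hymem : ∀ t, y t ∈ Y)
    (hxstep : ∀ t : ℕ, 1 ≤ t → IsMaxOn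
      (fun z => ⟪z, A (y (t - 1))⟫ - (1 / η) * breg RX gRX z (xh (t - 1))) X (x t))
    (hxhstep : ∀ t : ℕ, 1 ≤ t → IsMaxOn
      (fun z => ⟪z, A (y t)⟫ - (1 / η) * breg RX gRX z (xh (t - 1))) X (xh t))
    (T : ℕ) :
    (1 / (2 * η * ΩX * ‖A‖)) * ∑ t ∈ Finset.Icc 1 T,
        (‖x t - xh (t - 1)‖ ^ 2 + ‖xh t - x t‖ ^ 2) - 2 / ‖A‖
      ≤ ∑ t ∈ Finset.Icc 1 T, ‖y t - y (t - 1)‖ := by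
  have hΩ : ∀ v ∈ X, ‖v‖ ≤ ΩX := fun v hv => hΩX.2 ⟨v, hv, rfl⟩
  have hΩ0 : 0 ≤ ΩX := (norm_nonneg _).trans (hΩ _ (hxmem 0))
  have hpair : ∀ t, |⟪xh t, A (y t)⟫| ≤ ΩX := fun t =>
    (abs_real_inner_le_norm _ _).trans <| by
      simpa using mul_le_mul (hΩ _ (hxhmem t)) (hAnorm _ (hymem t)) (norm_nonneg _) hΩ0
  refine one_div_mul_sub_two_div_le hη.le hΩ0 (norm_nonneg A)
    (sum_nonneg fun t _ => norm_nonneg _) ?_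
  calc _ ≤ ∑ t ∈ Icc 1 T, 2 * η * ((⟪xh t, A (y t)⟫ - ⟪xh (t - 1), A (y (t - 1))⟫)
          + ΩX * ‖A‖ * ‖y t - y (t - 1)‖) := by
        refine sum_le_sum fun t ht => ?_
        have ht1 : 1 ≤ t := (mem_Icc.1 ht).1
        refine (sq_add_sq_le_of_optimistic_step hX hRXsc hη (hxhmem _) (hxmem t) (hxhmem t)
          (hxstep t ht1) (hxhstep t ht1)).trans ?_
        gcongr
        linarith [real_inner_map_sub_le A (hΩ _ (hxmem t)) (y t) (y (t - 1))]
    _ = 2 * η * ((⟪xh T, A (y T)⟫ - ⟪xh 0, A (y 0)⟫)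
          + ΩX * ‖A‖ * ∑ t ∈ Icc 1 T, ‖y t - y (t - 1)‖) := by
        rw [← mul_sum, sum_add_distrib, sum_Icc_one_sub_pred (fun t => ⟪xh t, A (y t)⟫),
          ← mul_sum]
    _ ≤ 2 * η * (2 * ΩX + ΩX * ‖A‖ * ∑ t ∈ Icc 1 T, ‖y t - y (t - 1)‖) := by
        gcongr
        linarith [abs_le.1 (hpair T), abs_le.1 (hpair 0)]

/-- **Balancedness.** Suppose both players in a bimatrix game `(A, B)` employ
OMD with learning rate `η > 0` and `1`-strongly convex regularizers, where player `X`'s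
utility at time `t` is `A·y⁽ᵗ⁾` with `‖A·y‖ ≤ 1` on `Y`. Then for any `T ∈ ℕ`,
`Σ_{t=1}^T ‖y⁽ᵗ⁾ − y⁽ᵗ⁻¹⁾‖ ≥ (1/(2η·Ω_X·‖A‖)) Σ_{t=1}^T (‖x⁽ᵗ⁾ − x̂⁽ᵗ⁻¹⁾‖² + ‖x̂⁽ᵗ⁾ − x⁽ᵗ⁾‖²)
− 2/‖A‖`, where `Ω_X = max_{x∈X} ‖x‖` and `‖A‖` is the operator norm. -/
theorem stmt5 {E F : Type*} [NormedAddCommGroup E] [InnerProductSpace ℝ E]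
    [NormedAddCommGroup F] [InnerProductSpace ℝ F]
    (X : Set E) (hX : Convex ℝ X) (hXc : IsCompact X) (hXne : X.Nonempty)
    (Y : Set F) (hY : Convex ℝ Y) (hYc : IsCompact Y) (hYne : Y.Nonempty)
    (A : F →L[ℝ] E) (hA : A ≠ 0)
    (hAnorm : ∀ w ∈ Y, ‖A w‖ ≤ 1)
    (ΩX : ℝ) (hΩX : IsGreatest ((fun z => ‖z‖) '' X) ΩX)
    (η : ℝ) (hη : 0 < η)
    (RX : E → ℝ) (gRX : E → E)
    (hRXsc : ∀ z ∈ X, ∀ z' ∈ X,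
      RX z' + ⟪gRX z', z - z'⟫ + (1 / 2) * ‖z - z'‖ ^ 2 ≤ RX z)
    (x xh : ℕ → E) (y : ℕ → F)
    (hxmem : ∀ t, x t ∈ X) (hxhmem : ∀ t, xh t ∈ X) (hymem : ∀ t, y t ∈ Y)
    (hx0 : x 0 = xh 0) (hxinit : IsMinOn RX X (xh 0))
    (hxstep : ∀ t : ℕ, 1 ≤ t → IsMaxOn
      (fun z => ⟪z, A (y (t - 1))⟫ - (1 / η) * breg RX gRX z (xh (t - 1))) X (x t))
    (hxhstep : ∀ t : ℕ, 1 ≤ t → IsMaxOn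
      (fun z => ⟪z, A (y t)⟫ - (1 / η) * breg RX gRX z (xh (t - 1))) X (xh t))
    (T : ℕ) :
    (1 / (2 * η * ΩX * ‖A‖)) * ∑ t ∈ Finset.Icc 1 T,
        (‖x t - xh (t - 1)‖ ^ 2 + ‖xh t - x t‖ ^ 2) - 2 / ‖A‖
      ≤ ∑ t ∈ Finset.Icc 1 T, ‖y t - y (t - 1)‖ :=
  stmt5_general X hX Y A hAnorm ΩX hΩX η hη RX gRX hRXsc x xh y hxmem hxhmem hymem hxstep hxhstep T
end
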